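/- arXiv:2407.14446 — 7 statements merged into one kernel-verified Lean document; each statement's English description precedes it below -/
import Mathlib

section
/- Let ζ : [0,∞) → [0,1] be a charge curve: strictly increasing on [0, T], equal to 1 for t ≥ T, differentiable with monotonically non-increasing derivative ζ'. Define the charge increment function Δζ(y, t) = ζ(ζ⁻¹(y) + t) − y for y ∈ [0,1] and t ≥ 0. Then for every fixed t ≥ 0, the map y ↦ Δζ(y, t) is monotonically non-increasing in y on [0, 1]. -/
/-!
The increment `Δζ(y, t)` is `g (ζ⁻¹ y)` for `g x = ζ (x + t) - ζ x`. Since `g' x = ζ' (x + t) - ζ' x ≤ 0`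
by the monotonicity of `ζ'`, `g` is antitone, and `ζ⁻¹` is monotone as the inverse of a strictly
increasing function; an antitone function composed with a monotone one is antitone.
-/

open Set

theorem StrictMonoOn.monotoneOn_of_rightInvOn {α β : Type*} [LinearOrder α] [Preorder β]
    {f : α → β} {g : β → α} {s : Set α} {t : Set β} (hf : StrictMonoOn f s)
    (hg : MapsTo g t s) (hfg : RightInvOn g f t) : MonotoneOn g t := by
  intro y₁ hy₁ y₂ hy₂ hy
  rwa [← hf.le_iff_le (hg hy₁) (hg hy₂), hfg hy₁, hfg hy₂]

theorem antitoneOn_sub_comp_add_const_of_antitoneOn_deriv {f : ℝ → ℝ} {a t : ℝ} (ht : 0 ≤ t)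
    (hf : ∀ x ∈ Ici a, DifferentiableAt ℝ f x) (hf' : AntitoneOn (deriv f) (Ici a)) :
    AntitoneOn (fun x => f (x + t) - f x) (Ici a) := by
  have hshift : ∀ x ∈ Ici a, x + t ∈ Ici a := fun x hx => le_add_of_le_of_nonneg hx ht
  have hshifted : ∀ x ∈ Ici a, DifferentiableAt ℝ (fun x => f (x + t)) x := fun x hx =>
    differentiableAt_comp_add_const.mpr (hf _ (hshift x hx))
  have hdiff : ∀ x ∈ Ici a, DifferentiableAt ℝ (fun x => f (x + t) - f x) x := fun x hx =>
    (hshifted x hx).sub (hf x hx)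
  refine antitoneOn_of_deriv_nonpos (convex_Ici a)
    (fun x hx => (hdiff x hx).continuousAt.continuousWithinAt)
    (fun x hx => (hdiff x (interior_subset hx)).differentiableWithinAt) fun x hx => ?_
  have hx : x ∈ Ici a := interior_subset hx
  rw [deriv_fun_sub (hshifted x hx) (hf x hx), deriv_comp_add_const, sub_nonpos]
  exact hf' hx (hshift x hx) (le_add_of_nonneg_right ht)

theorem charge_increment_antitone_general
    (ζ ζinv : ℝ → ℝ) (T : ℝ)
    (hmono : StrictMonoOn ζ (Set.Icc 0 T))
    (hdiff : ∀ t, 0 ≤ t → DifferentiableAt ℝ ζ t)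
    (hderiv : ∀ s t : ℝ, 0 ≤ s → s ≤ t → deriv ζ t ≤ deriv ζ s)
    (hinv : ∀ y ∈ Set.Icc (0:ℝ) 1, ζinv y ∈ Set.Icc 0 T ∧ ζ (ζinv y) = y) :
    ∀ t : ℝ, 0 ≤ t →
      AntitoneOn (fun y => ζ (ζinv y + t) - y) (Set.Icc 0 1) := by
  intro t ht
  have hinv_mono : MonotoneOn ζinv (Icc 0 1) :=
    hmono.monotoneOn_of_rightInvOn (fun y hy => (hinv y hy).1) fun y hy => (hinv y hy).2
  have hincr : AntitoneOn (fun x => ζ (x + t) - ζ x) (Ici 0) :=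
    antitoneOn_sub_comp_add_const_of_antitoneOn_deriv ht hdiff
      fun s hs t' _ hst => hderiv s t' hs hst
  intro y₁ hy₁ y₂ hy₂ hy
  have hcomp := hincr (hinv y₁ hy₁).1.1 (hinv y₂ hy₂).1.1 (hinv_mono hy₁ hy₂ hy)
  simpa only [(hinv y₁ hy₁).2, (hinv y₂ hy₂).2] using hcomp

/-- For a charge curve ζ (strictly increasing on [0,T], equal to 1 beyond T,
differentiable with non-increasing derivative) with inverse ζinv on [0,1], the charge
increment function y ↦ ζ(ζ⁻¹(y) + t) − y is monotonically non-increasing in y on [0,1]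
for each fixed t ≥ 0. -/
theorem charge_increment_antitone
    (ζ ζinv : ℝ → ℝ) (T : ℝ) (hT : 0 < T)
    (hmono : StrictMonoOn ζ (Set.Icc 0 T))
    (h0 : ζ 0 = 0)
    (h1 : ∀ t, T ≤ t → ζ t = 1)
    (hdiff : ∀ t, 0 ≤ t → DifferentiableAt ℝ ζ t)
    (hderiv : ∀ s t : ℝ, 0 ≤ s → s ≤ t → deriv ζ t ≤ deriv ζ s)
    (hinv : ∀ y ∈ Set.Icc (0:ℝ) 1, ζinv y ∈ Set.Icc 0 T ∧ ζ (ζinv y) = y) :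
    ∀ t : ℝ, 0 ≤ t →
      AntitoneOn (fun y => ζ (ζinv y + t) - y) (Set.Icc 0 1) :=
  charge_increment_antitone_general ζ ζinv T hmono hdiff hderiv hinv
end

section
/- Let ζ be a charge curve with inverse ζ⁻¹ on [0,1], and let Δζ(y,t) = ζ(ζ⁻¹(y)+t) − y. Given a finite list of positive time steps θ₁,…,θ_k and an initial state y₀ ∈ [0,1], define iteratively y_i = y_{i−1} + Δζ(y_{i−1}, θ_i). Then the final state satisfies y_k = Δζ(y₀, θ₁ + ⋯ + θ_k) + y₀. That is, iterated application of the charge increment function over successive time steps equals a single application over the total duration. -/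
open Finset Set

section ChargeCurve

variable {ζ ζinv : ℝ → ℝ} {T : ℝ}

/-- Past `T` the curve is saturated: there `ζinv (ζ s) = T` rather than `s`, but both sides
equal `1`. -/
theorem charge_after_charge (hT : 0 ≤ T) (h1 : ∀ t, T ≤ t → ζ t = 1)
    (hinvζ : ∀ s ∈ Icc (0 : ℝ) T, ζinv (ζ s) = s) {s t : ℝ} (hs : 0 ≤ s) (ht : 0 ≤ t) :
    ζ (ζinv (ζ s) + t) = ζ (s + t) := by
  rcases le_or_gt s T with hsT | hTs
  · rw [hinvζ s ⟨hs, hsT⟩]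
  · have hinv_one : ζinv 1 = T := by
      simpa only [h1 T le_rfl] using hinvζ T ⟨hT, le_rfl⟩
    rw [h1 s hTs.le, hinv_one, h1 _ (by linarith), h1 _ (by linarith)]

theorem charge_iterate_eq_charge_sum (hT : 0 ≤ T) (h1 : ∀ t, T ≤ t → ζ t = 1)
    (hinvζ : ∀ s ∈ Icc (0 : ℝ) T, ζinv (ζ s) = s) {k : ℕ} {θ y : ℕ → ℝ}
    (hθ : ∀ i < k, 0 ≤ θ i) {s₀ : ℝ} (hs₀ : 0 ≤ s₀) (hy0 : y 0 = ζ s₀)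
    (hstep : ∀ i < k, y (i + 1) = ζ (ζinv (y i) + θ i)) :
    ∀ j ≤ k, y j = ζ (s₀ + ∑ i ∈ range j, θ i) := by
  intro j hj
  induction j with
  | zero => simpa using hy0
  | succ j ih =>
    have hsum : 0 ≤ ∑ i ∈ range j, θ i :=
      sum_nonneg fun i hi => hθ i (by have := mem_range.mp hi; omega)
    rw [hstep j hj, ih (by omega), sum_range_succ, ← add_assoc,
      charge_after_charge hT h1 hinvζ (add_nonneg hs₀ hsum) (hθ j hj)]

end ChargeCurve

theorem charge_increment_iteration_general
    (ζ ζinv : ℝ → ℝ) (T : ℝ) (hT : 0 < T)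
    (h1 : ∀ t, T ≤ t → ζ t = 1)
    (hinv : ∀ y ∈ Set.Icc (0:ℝ) 1, ζinv y ∈ Set.Icc 0 T ∧ ζ (ζinv y) = y)
    (hinvζ : ∀ s ∈ Set.Icc (0:ℝ) T, ζinv (ζ s) = s)
    (k : ℕ) (θ : ℕ → ℝ) (hθ : ∀ i < k, 0 < θ i)
    (y : ℕ → ℝ) (hy0 : y 0 ∈ Set.Icc (0:ℝ) 1)
    (hstep : ∀ i < k, y (i + 1) = y i + (ζ (ζinv (y i) + θ i) - y i)) :
    y k = (ζ (ζinv (y 0) + ∑ i ∈ Finset.range k, θ i) - y 0) + y 0 := by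
  obtain ⟨hinv_mem, hζ_inv⟩ := hinv _ hy0
  have hiter := charge_iterate_eq_charge_sum hT.le h1 hinvζ (fun i hi => (hθ i hi).le)
    hinv_mem.1 hζ_inv.symm (fun i hi => by rw [hstep i hi, add_sub_cancel]) k le_rfl
  rw [sub_add_cancel, hiter]

/-- Iterated application of the charge increment function
Δζ(y,t) = ζ(ζ⁻¹(y)+t) − y over successive positive time steps θ₁,…,θ_k equals a single
application over the total duration. -/
theorem charge_increment_iteration
    (ζ ζinv : ℝ → ℝ) (T : ℝ) (hT : 0 < T)
    (hmono : StrictMonoOn ζ (Set.Icc 0 T))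
    (h0 : ζ 0 = 0)
    (h1 : ∀ t, T ≤ t → ζ t = 1)
    (hinv : ∀ y ∈ Set.Icc (0:ℝ) 1, ζinv y ∈ Set.Icc 0 T ∧ ζ (ζinv y) = y)
    (hinvζ : ∀ s ∈ Set.Icc (0:ℝ) T, ζinv (ζ s) = s)
    (k : ℕ) (θ : ℕ → ℝ) (hθ : ∀ i < k, 0 < θ i)
    (y : ℕ → ℝ) (hy0 : y 0 ∈ Set.Icc (0:ℝ) 1)
    (hstep : ∀ i < k, y (i + 1) = y i + (ζ (ζinv (y i) + θ i) - y i)) :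
    y k = (ζ (ζinv (y 0) + ∑ i ∈ Finset.range k, θ i) - y 0) + y 0 :=
  charge_increment_iteration_general ζ ζinv T hT h1 hinv hinvζ k θ hθ y hy0 hstep
end

section
/- With the same setup as the maximum power curve domination lemma (f a monotonically non-increasing charging power profile, ζ the maximum power curve, ξ any charge curve with 0 < ξ' ≤ f∘ξ and ξ(0)=ζ(0)=0), we have ξ(t) ≤ ζ(t) for all t ≥ 0. -/
open Set Filter Topology

/-- Where `g` touches the barrier `h + ε (x - a)` we have `g ≥ h`, so antitonicity gives
`g' ≤ f (g) ≤ f (h) < (h + ε (x - a))'`; then let `ε → 0`. -/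
theorem image_le_ode_solution_of_antitoneOn {f g g' h : ℝ → ℝ} {s : Set ℝ} {a b : ℝ}
    (hf : AntitoneOn f s)
    (hg : ContinuousOn g (Icc a b)) (hg' : ∀ x ∈ Ico a b, HasDerivWithinAt g (g' x) (Ici x) x)
    (hh : ContinuousOn h (Icc a b))
    (hh' : ∀ x ∈ Ico a b, HasDerivWithinAt h (f (h x)) (Ici x) x)
    (hgs : ∀ x ∈ Ico a b, g x ∈ s) (hhs : ∀ x ∈ Ico a b, h x ∈ s)
    (hg'f : ∀ x ∈ Ico a b, g' x ≤ f (g x)) (ha : g a ≤ h a) :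
    ∀ ⦃x⦄, x ∈ Icc a b → g x ≤ h x := by
  intro x hx
  have perturbed : ∀ ε > 0, g x ≤ h x + ε * (x - a) := by
    intro ε hε
    refine image_le_of_deriv_right_lt_deriv_boundary' (B := fun y => h y + ε * (y - a))
      (B' := fun y => f (h y) + ε) hg hg' (by simpa using ha) (hh.add (by fun_prop))
      (fun y hy => ((hh' y hy).add (((hasDerivAt_id y).sub_const a).const_mul ε).hasDerivWithinAt
        ).congr_deriv (by simp))
      (fun y hy hgy => ?_) hx
    have hhg : h y ≤ g y := by nlinarith [hy.1, hgy]
    calc g' y ≤ f (g y) := hg'f y hy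
      _ ≤ f (h y) := hf (hhs y hy) (hgs y hy) hhg
      _ < f (h y) + ε := lt_add_of_pos_right _ hε
  have hlim : Tendsto (fun ε : ℝ => h x + ε * (x - a)) (𝓝[>] 0) (𝓝 (h x)) :=
    ((continuous_const.add (continuous_id.mul continuous_const)).tendsto' 0 _ (by simp)).mono_left
      nhdsWithin_le_nhds
  exact ge_of_tendsto hlim (eventually_nhdsWithin_of_forall perturbed)

theorem image_le_ode_solution_of_antitoneOn' {f g g' h : ℝ → ℝ} {s : Set ℝ} {a b : ℝ}
    (hf : AntitoneOn f s) (hg' : ∀ x ∈ Icc a b, HasDerivAt g (g' x) x)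
    (hh' : ∀ x ∈ Icc a b, HasDerivAt h (f (h x)) x)
    (hgs : ∀ x ∈ Ico a b, g x ∈ s) (hhs : ∀ x ∈ Ico a b, h x ∈ s)
    (hg'f : ∀ x ∈ Ico a b, g' x ≤ f (g x)) (ha : g a ≤ h a) :
    ∀ ⦃x⦄, x ∈ Icc a b → g x ≤ h x :=
  image_le_ode_solution_of_antitoneOn hf
    (fun x hx => (hg' x hx).continuousAt.continuousWithinAt)
    (fun x hx => (hg' x (Ico_subset_Icc_self hx)).hasDerivWithinAt)
    (fun x hx => (hh' x hx).continuousAt.continuousWithinAt)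
    (fun x hx => (hh' x (Ico_subset_Icc_self hx)).hasDerivWithinAt) hgs hhs hg'f ha

theorem charge_curve_le_max_power_curve_general
    (f : ℝ → ℝ) (hf : AntitoneOn f (Set.Icc 0 1))
    (ζ ξ : ℝ → ℝ) (T Tξ : ℝ) (hTξ : 0 < Tξ)
    (hζ0 : ζ 0 = 0) (hξ0 : ξ 0 = 0)
    (hζrange : ∀ t, 0 ≤ t → ζ t ∈ Set.Icc (0:ℝ) 1)
    (hξrange : ∀ t, 0 ≤ t → ξ t ∈ Set.Icc (0:ℝ) 1)
    (hζode : ∀ t ∈ Set.Ico (0:ℝ) T, HasDerivAt ζ (f (ζ t)) t)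
    (hζ1 : ∀ t, T ≤ t → ζ t = 1)
    (hξdiff : ∀ t, 0 ≤ t → DifferentiableAt ℝ ξ t)
    (hξrate : ∀ t ∈ Set.Ico (0:ℝ) Tξ, 0 < deriv ξ t ∧ deriv ξ t ≤ f (ξ t))
    (hξ1 : ∀ t, Tξ ≤ t → ξ t = 1) :
    ∀ t, 0 ≤ t → ξ t ≤ ζ t := by
  intro t ht
  rcases le_or_gt T t with hTt | htT
  · exact hζ1 t hTt ▸ (hξrange t ht).2
  have hζ' : ∀ x, 0 ≤ x → x ≤ t → HasDerivAt ζ (f (ζ x)) x :=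
    fun x hx0 hxt => hζode x ⟨hx0, hxt.trans_lt htT⟩
  have ξ_le_ζ : ∀ s, 0 ≤ s → s ≤ t → s ≤ Tξ → ξ s ≤ ζ s := fun s hs0 hst hsTξ =>
    image_le_ode_solution_of_antitoneOn' hf (fun x hx => (hξdiff x hx.1).hasDerivAt)
      (fun x hx => hζ' x hx.1 (hx.2.trans hst)) (fun x hx => hξrange x hx.1)
      (fun x hx => hζrange x hx.1) (fun x hx => (hξrate x ⟨hx.1, hx.2.trans_le hsTξ⟩).2)
      (by rw [hξ0, hζ0]) ⟨hs0, le_rfl⟩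
  rcases le_or_gt t Tξ with htTξ | hTξt
  · exact ξ_le_ζ t ht le_rfl htTξ
  -- `ζ` attains its maximum `1` where `ξ` does, so `f 1 = 0` and the constant `1` is a
  -- subsolution that `ζ` dominates from then on.
  have hζTξ : ζ Tξ = 1 :=
    le_antisymm (hζrange Tξ hTξ.le).2 (hξ1 Tξ le_rfl ▸ ξ_le_ζ Tξ hTξ.le hTξt.le le_rfl)
  have hf1 : f 1 = 0 := by
    have hmax : IsLocalMax ζ Tξ := by
      filter_upwards [eventually_gt_nhds hTξ] with x hx
      exact hζTξ ▸ (hζrange x hx.le).2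
    simpa [hζTξ] using hmax.hasDerivAt_eq_zero (hζ' Tξ hTξ.le hTξt.le)
  rw [hξ1 t hTξt.le]
  exact image_le_ode_solution_of_antitoneOn' hf (g := fun _ => 1) (g' := fun _ => 0)
    (fun x _ => hasDerivAt_const x 1) (fun x hx => hζ' x (hTξ.le.trans hx.1) hx.2)
    (fun _ _ => right_mem_Icc.2 zero_le_one) (fun x hx => hζrange x (hTξ.le.trans hx.1))
    (fun _ _ => hf1.ge) hζTξ.ge ⟨hTξt.le, le_rfl⟩

/-- Grönwall-type comparison: any charge curve ξ with 0 < ξ' ≤ f∘ξ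
(for a monotonically non-increasing power profile f) is dominated by the maximum power
charge curve ζ solving ζ' = f(ζ), both starting at 0: ξ(t) ≤ ζ(t) for all t ≥ 0. -/
theorem charge_curve_le_max_power_curve
    (f : ℝ → ℝ) (hf : AntitoneOn f (Set.Icc 0 1))
    (ζ ξ : ℝ → ℝ) (T Tξ : ℝ) (hT : 0 < T) (hTξ : 0 < Tξ)
    (hζ0 : ζ 0 = 0) (hξ0 : ξ 0 = 0)
    (hζrange : ∀ t, 0 ≤ t → ζ t ∈ Set.Icc (0:ℝ) 1)
    (hξrange : ∀ t, 0 ≤ t → ξ t ∈ Set.Icc (0:ℝ) 1)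
    (hζode : ∀ t ∈ Set.Ico (0:ℝ) T, HasDerivAt ζ (f (ζ t)) t)
    (hζ1 : ∀ t, T ≤ t → ζ t = 1)
    (hξdiff : ∀ t, 0 ≤ t → DifferentiableAt ℝ ξ t)
    (hξrate : ∀ t ∈ Set.Ico (0:ℝ) Tξ, 0 < deriv ξ t ∧ deriv ξ t ≤ f (ξ t))
    (hξ1 : ∀ t, Tξ ≤ t → ξ t = 1) :
    ∀ t, 0 ≤ t → ξ t ≤ ζ t :=
  charge_curve_le_max_power_curve_general f hf ζ ξ T Tξ hTξ hζ0 hξ0 hζrange hξrange hζode hζ1 hξdiff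
    hξrate hξ1
end

section
/- Let ζ be a charge curve and ζ̂ an approximating charge curve with increment functions Δζ and Δζ̂. Suppose the pointwise increment error ε(y,t) = Δζ̂(y,t) − Δζ(y,t) satisfies ε(y,t) ≤ 0 for all y ∈ [0,1] and t ∈ [0, T]. Consider a vehicle course consisting of alternating blocks and m−1 recharge events, with exact charge propagation y and approximate propagation ŷ defined identically except that recharge events update via Δζ respectively Δζ̂ (both start at soc 1 at the depot and subtract the same consumptions along blocks). Then the cumulative error ε(C_j) = ŷ(C_j) − y(C_j) is zero on all course elements before the first recharge event, and for every course element C_j after recharge event i it satisfies 0 ≥ ε(y(s_i^s), t_i) ≥ ε(C_j), where s_i^s is the start of the recharge event immediately preceding C_j's block and t_i its duration. -/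
/-- Error propagation with an underestimating increment function.
If the approximate increment Δζ̂ never exceeds the exact Δζ (ε(y,t) ≤ 0), then the
cumulative error ε(C_j) = ŷ(C_j) − y(C_j) is zero before the first recharge event,
and for any later element C_j, with i the recharge event immediately preceding C_j's
block, 0 ≥ ε(y(s_i^s), t_i) ≥ ε(C_j). -/
theorem error_propagation_underestimate
    (n : ℕ) (chg : ℕ → Bool) (t e : ℕ → ℝ) (T : ℝ) (hT : 0 < T)
    (Δ Δ' : ℝ → ℝ → ℝ)  -- exact and approximate charge increment functions Δζ, Δζ̂
    (he : ∀ j, 0 ≤ e j) (ht : ∀ j, t j ∈ Set.Icc 0 T)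
    (y yh : ℕ → ℝ)       -- exact and approximate charge propagation along the course
    (hy0 : y 0 = 1) (hyh0 : yh 0 = 1)
    (hystep : ∀ j < n,
      (chg j = true → y (j + 1) = y j + Δ (y j) (t j)) ∧
      (chg j = false → y (j + 1) = y j - e j))
    (hyhstep : ∀ j < n,
      (chg j = true → yh (j + 1) = yh j + Δ' (yh j) (t j)) ∧
      (chg j = false → yh (j + 1) = yh j - e j))
    (hrange : ∀ j ≤ n, y j ∈ Set.Icc (0:ℝ) 1 ∧ yh j ∈ Set.Icc (0:ℝ) 1)
    (hΔanti : ∀ t' ∈ Set.Icc (0:ℝ) T, AntitoneOn (fun z => Δ z t') (Set.Icc 0 1))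
    (hΔ'anti : ∀ t' ∈ Set.Icc (0:ℝ) T, AntitoneOn (fun z => Δ' z t') (Set.Icc 0 1))
    (hmonoΔ : ∀ t' ∈ Set.Icc (0:ℝ) T, MonotoneOn (fun z => z + Δ z t') (Set.Icc 0 1))
    (hmonoΔ' : ∀ t' ∈ Set.Icc (0:ℝ) T, MonotoneOn (fun z => z + Δ' z t') (Set.Icc 0 1))
    (heps : ∀ z ∈ Set.Icc (0:ℝ) 1, ∀ t' ∈ Set.Icc (0:ℝ) T, Δ' z t' - Δ z t' ≤ 0) :
    (∀ j ≤ n, (∀ i < j, chg i = false) → yh j - y j = 0) ∧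
    (∀ j ≤ n, ∀ i < j, chg i = true → (∀ i', i < i' → i' < j → chg i' = false) →
      yh j - y j ≤ Δ' (y i) (t i) - Δ (y i) (t i) ∧
      Δ' (y i) (t i) - Δ (y i) (t i) ≤ 0) := by
  have hle : ∀ j, j ≤ n → yh j ≤ y j := by
    intro j
    induction j with
    | zero => intro _; rw [hy0, hyh0]
    | succ k ih =>
      intro hk
      have hk' : k < n := Nat.lt_of_succ_le hk
      have hkn : k ≤ n := le_of_lt hk'
      have hyk := (hrange k hkn).1
      have hyhk := (hrange k hkn).2
      have hl := ih hkn
      cases hc : chg k with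
      | false =>
        rw [(hystep k hk').2 hc, (hyhstep k hk').2 hc]
        linarith
      | true =>
        rw [(hystep k hk').1 hc, (hyhstep k hk').1 hc]
        have h1 : yh k + Δ' (yh k) (t k) ≤ y k + Δ' (y k) (t k) :=
          hmonoΔ' (t k) (ht k) hyhk hyk hl
        have h2 : Δ' (y k) (t k) - Δ (y k) (t k) ≤ 0 := heps (y k) hyk (t k) (ht k)
        linarith
  constructor
  · intro j hj hall
    induction j with
    | zero => rw [hy0, hyh0]; ring
    | succ k ih =>
      have hk' : k < n := Nat.lt_of_succ_le hj
      have hc : chg k = false := hall k (Nat.lt_succ_self k)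
      rw [(hystep k hk').2 hc, (hyhstep k hk').2 hc]
      have := ih (le_of_lt hk') (fun i hi => hall i (Nat.lt_succ_of_lt hi))
      linarith
  · intro j hj i hij hc hafter
    have hin : i < n := lt_of_lt_of_le hij hj
    have hik : i ≤ n := le_of_lt hin
    have hyk := (hrange i hik).1
    have hyhk := (hrange i hik).2
    have hl := hle i hik
    have heq1 : yh (i+1) - y (i+1) ≤ Δ' (y i) (t i) - Δ (y i) (t i) := by
      rw [(hystep i hin).1 hc, (hyhstep i hin).1 hc]
      have h1 : yh i + Δ' (yh i) (t i) ≤ y i + Δ' (y i) (t i) :=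
        hmonoΔ' (t i) (ht i) hyhk hyk hl
      linarith
    have heps0 : Δ' (y i) (t i) - Δ (y i) (t i) ≤ 0 := heps (y i) hyk (t i) (ht i)
    refine ⟨?_, heps0⟩
    have hconst : ∀ k, i + 1 ≤ k → k ≤ j → yh k - y k = yh (i+1) - y (i+1) := by
      intro k
      induction k with
      | zero => intro h _; omega
      | succ m ih =>
        intro h1 h2
        rcases Nat.lt_or_ge (i+1) (m+1) with hlt | hge
        · have hm1 : i + 1 ≤ m := by omega
          have hmn : m < n := by omega
          have hcf : chg m = false := hafter m (by omega) (by omega)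
          rw [(hystep m hmn).2 hcf, (hyhstep m hmn).2 hcf]
          have := ih hm1 (by omega)
          linarith
        · have hm : m + 1 = i + 1 := by omega
          rw [hm]
    have := hconst j hij (le_refl j)
    linarith
end

section
/- Under the hypotheses of the error-propagation setting, if the increment error ε(y,t) = Δζ̂(y,t) − Δζ(y,t) is ≤ 0 everywhere, then for every element C_j of the vehicle course the cumulative error is bounded below by the sum of one-step errors at preceding recharge events: ε(C_j) ≥ Σ_{i : s_i^e ⪯ C_j} ε(y(s_i^s), t_i). In particular, |ε(C_j)| ≤ σ(j)·‖Δζ̂ − Δζ‖_∞, where σ(j) is the number of recharge events before C_j. -/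
/-- With an everywhere-underestimating increment function (ε ≤ 0), the
cumulative error at every course element is bounded below by the sum of one-step errors
at preceding recharge events; in particular |ε(C_j)| ≤ σ(j)·‖Δζ̂ − Δζ‖. -/
theorem error_propagation_sum_bound
    (n : ℕ) (chg : ℕ → Bool) (t e : ℕ → ℝ) (T : ℝ) (hT : 0 < T)
    (Δ Δ' : ℝ → ℝ → ℝ)  -- exact and approximate charge increment functions Δζ, Δζ̂
    (he : ∀ j, 0 ≤ e j) (ht : ∀ j, t j ∈ Set.Icc 0 T)
    (y yh : ℕ → ℝ)       -- exact and approximate charge propagation along the course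
    (hy0 : y 0 = 1) (hyh0 : yh 0 = 1)
    (hystep : ∀ j < n,
      (chg j = true → y (j + 1) = y j + Δ (y j) (t j)) ∧
      (chg j = false → y (j + 1) = y j - e j))
    (hyhstep : ∀ j < n,
      (chg j = true → yh (j + 1) = yh j + Δ' (yh j) (t j)) ∧
      (chg j = false → yh (j + 1) = yh j - e j))
    (hrange : ∀ j ≤ n, y j ∈ Set.Icc (0:ℝ) 1 ∧ yh j ∈ Set.Icc (0:ℝ) 1)
    (hΔanti : ∀ t' ∈ Set.Icc (0:ℝ) T, AntitoneOn (fun z => Δ z t') (Set.Icc 0 1))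
    (hΔ'anti : ∀ t' ∈ Set.Icc (0:ℝ) T, AntitoneOn (fun z => Δ' z t') (Set.Icc 0 1))
    (hmonoΔ : ∀ t' ∈ Set.Icc (0:ℝ) T, MonotoneOn (fun z => z + Δ z t') (Set.Icc 0 1))
    (hmonoΔ' : ∀ t' ∈ Set.Icc (0:ℝ) T, MonotoneOn (fun z => z + Δ' z t') (Set.Icc 0 1))
    (heps : ∀ z ∈ Set.Icc (0:ℝ) 1, ∀ t' ∈ Set.Icc (0:ℝ) T, Δ' z t' - Δ z t' ≤ 0) :
    (∀ j ≤ n,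
      ∑ i ∈ (Finset.range j).filter (fun i => chg i = true),
        (Δ' (y i) (t i) - Δ (y i) (t i)) ≤ yh j - y j) ∧
    (∀ B : ℝ, (∀ z ∈ Set.Icc (0:ℝ) 1, ∀ t' ∈ Set.Icc (0:ℝ) T, |Δ' z t' - Δ z t'| ≤ B) →
      ∀ j ≤ n, |yh j - y j| ≤
        ((Finset.range j).filter (fun i => chg i = true)).card * B) := by
  have key : ∀ j ≤ n, yh j - y j ≤ 0 ∧
      ∑ i ∈ (Finset.range j).filter (fun i => chg i = true),
        (Δ' (y i) (t i) - Δ (y i) (t i)) ≤ yh j - y j := by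
    intro j hj
    induction j with
    | zero => simp [hy0, hyh0]
    | succ j ih =>
      have hjn : j < n := hj
      obtain ⟨ih1, ih2⟩ := ih (le_of_lt hjn)
      obtain ⟨hyj, hyhj⟩ := hrange j (le_of_lt hjn)
      have hsum : ∀ f : ℕ → ℝ,
          ∑ i ∈ (Finset.range (j+1)).filter (fun i => chg i = true), f i
          = (∑ i ∈ (Finset.range j).filter (fun i => chg i = true), f i)
            + (if chg j = true then f j else 0) := by
        intro f
        rw [Finset.sum_filter, Finset.sum_range_succ, ← Finset.sum_filter]
      cases hc : chg j with
      | false =>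
        have h1 := (hystep j hjn).2 hc
        have h2 := (hyhstep j hjn).2 hc
        rw [h1, h2, hsum]
        simp only [hc, Bool.false_eq_true, if_false, add_zero]
        exact ⟨by linarith, by linarith⟩
      | true =>
        have h1 := (hystep j hjn).1 hc
        have h2 := (hyhstep j hjn).1 hc
        have hyhle : yh j ≤ y j := by linarith
        have htj := ht j
        have hmono := hmonoΔ' (t j) htj hyhj hyj hyhle
        have heq := heps (y j) hyj (t j) htj
        have hanti := hΔ'anti (t j) htj hyhj hyj hyhle
        simp only at hmono hanti
        rw [h1, h2, hsum]
        simp only [hc, if_true]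
        exact ⟨by linarith, by linarith⟩
  refine ⟨fun j hj => (key j hj).2, fun B hB j hj => ?_⟩
  obtain ⟨h1, h2⟩ := key j hj
  rw [abs_of_nonpos h1]
  have : -(yh j - y j) ≤ ∑ i ∈ (Finset.range j).filter (fun i => chg i = true),
      (Δ (y i) (t i) - Δ' (y i) (t i)) := by
    have hneg : ∑ i ∈ (Finset.range j).filter (fun i => chg i = true),
        (Δ (y i) (t i) - Δ' (y i) (t i))
        = -∑ i ∈ (Finset.range j).filter (fun i => chg i = true),
        (Δ' (y i) (t i) - Δ (y i) (t i)) := by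
      rw [← Finset.sum_neg_distrib]; apply Finset.sum_congr rfl; intro i _; ring
    rw [hneg]; linarith
  refine this.trans ?_
  calc ∑ i ∈ (Finset.range j).filter (fun i => chg i = true),
        (Δ (y i) (t i) - Δ' (y i) (t i))
      ≤ ∑ _i ∈ (Finset.range j).filter (fun i => chg i = true), B := by
        apply Finset.sum_le_sum
        intro i hi
        have hin : i ≤ n := le_trans (le_of_lt (Finset.mem_range.mp (Finset.mem_filter.mp hi).1)) hj
        have := hB (y i) ((hrange i hin).1) (t i) (ht i)
        have := abs_le.mp this
        linarith [this.1]
    _ = _ := by rw [Finset.sum_const, nsmul_eq_mul]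
end

section
/- Symmetric overestimation bound: if ε(y,t) = Δζ̂(y,t) − Δζ(y,t) ≥ 0 for all y ∈ [0,1], t ∈ [0,T], then along any vehicle course, ε(C_j) = 0 before the first recharge event and 0 ≤ ε(y(s_{σ(j)}^s), t_{σ(j)}) ≤ ε(C_j) ≤ Σ_{i : s_i^e ⪯ C_j} ε(y(s_i^s), t_i) for all later elements C_j. -/
/-!
Write `d j = ŷ(C_j) - y(C_j)` for the propagated error and `ε j = Δζ̂(y j, t j) - Δζ(y j, t j)`
for the local error of a recharge. A discharge shifts both curves by the same amount, so it
leaves `d` unchanged. At a recharge starting from `y ≤ ŷ`, monotonicity of `z ↦ z + Δζ̂ z`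
gives `ŷ + Δζ̂ ŷ ≥ y + Δζ̂ y`, hence the new error is at least `ε`; antitonicity of `Δζ̂` gives
`Δζ̂ ŷ ≤ Δζ̂ y`, hence the new error is at most `d + ε`.
-/

section ChargeStep

variable {s : Set ℝ} {f : ℝ → ℝ} {y yh c : ℝ}

theorem charge_step_error_ge (hf : MonotoneOn (fun z => z + f z) s) (hy : y ∈ s) (hyh : yh ∈ s)
    (hle : y ≤ yh) : f y - c ≤ (yh + f yh) - (y + c) := by
  have := hf hy hyh hle
  dsimp only at this
  linarith

theorem charge_step_error_le (hf : AntitoneOn f s) (hy : y ∈ s) (hyh : yh ∈ s) (hle : y ≤ yh) :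
    (yh + f yh) - (y + c) ≤ (yh - y) + (f y - c) := by
  have := hf hy hyh hle
  linarith

end ChargeStep

/-- `d` is the propagated error along a course of length `n`, `chg j` flags a recharge at step
`j`, and `ε j` is the local error that recharge introduces. -/
structure ErrorRecursion (n : ℕ) (chg : ℕ → Bool) (d ε : ℕ → ℝ) : Prop where
  zero : d 0 = 0
  local_nonneg : ∀ j < n, 0 ≤ ε j
  discharge : ∀ j < n, chg j = false → d (j + 1) = d j
  charge : ∀ j < n, chg j = true → 0 ≤ d j → ε j ≤ d (j + 1) ∧ d (j + 1) ≤ d j + ε j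

namespace ErrorRecursion

variable {n : ℕ} {chg : ℕ → Bool} {d ε : ℕ → ℝ}

theorem nonneg (h : ErrorRecursion n chg d ε) : ∀ j ≤ n, 0 ≤ d j
  | 0, _ => h.zero.ge
  | j + 1, (hj : j < n) => by
    cases hc : chg j
    · rw [h.discharge j hj hc]
      exact h.nonneg j hj.le
    · exact (h.local_nonneg j hj).trans (h.charge j hj hc (h.nonneg j hj.le)).1

theorem eq_of_forall_Ico_discharge (h : ErrorRecursion n chg d ε) {i j : ℕ} (hij : i ≤ j)
    (hj : j ≤ n) (hno : ∀ k, i ≤ k → k < j → chg k = false) : d j = d i := by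
  induction j, hij using Nat.le_induction with
  | base => rfl
  | succ j hij ih =>
    rw [h.discharge j hj (hno j hij j.lt_succ_self)]
    exact ih (Nat.le_of_succ_le hj) fun k hik hkj => hno k hik (hkj.trans j.lt_succ_self)

theorem le_of_last_charge (h : ErrorRecursion n chg d ε) {i j : ℕ} (hij : i < j) (hj : j ≤ n)
    (hci : chg i = true) (hno : ∀ k, i < k → k < j → chg k = false) : ε i ≤ d j := by
  have hin : i < n := hij.trans_le hj
  rw [h.eq_of_forall_Ico_discharge hij hj hno]
  exact (h.charge i hin hci (h.nonneg i hin.le)).1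

theorem le_sum (h : ErrorRecursion n chg d ε) :
    ∀ j ≤ n, d j ≤ ∑ k ∈ (Finset.range j).filter (fun k => chg k = true), ε k
  | 0, _ => by simp [h.zero]
  | j + 1, (hj : j < n) => by
    rw [Finset.range_add_one, Finset.filter_insert]
    cases hc : chg j
    · rw [if_neg (by simp), h.discharge j hj hc]
      exact h.le_sum j hj.le
    · rw [if_pos rfl, Finset.sum_insert (by simp)]
      have := (h.charge j hj hc (h.nonneg j hj.le)).2
      linarith [h.le_sum j hj.le]

end ErrorRecursion

theorem error_propagation_overestimate_general
    (n : ℕ) (chg : ℕ → Bool) (t e : ℕ → ℝ) (T : ℝ)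
    (Δ Δ' : ℝ → ℝ → ℝ)  -- exact and approximate charge increment functions Δζ, Δζ̂
    (ht : ∀ j, t j ∈ Set.Icc 0 T)
    (y yh : ℕ → ℝ)       -- exact and approximate charge propagation along the course
    (hy0 : y 0 = 1) (hyh0 : yh 0 = 1)
    (hystep : ∀ j < n,
      (chg j = true → y (j + 1) = y j + Δ (y j) (t j)) ∧
      (chg j = false → y (j + 1) = y j - e j))
    (hyhstep : ∀ j < n,
      (chg j = true → yh (j + 1) = yh j + Δ' (yh j) (t j)) ∧
      (chg j = false → yh (j + 1) = yh j - e j))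
    (hrange : ∀ j ≤ n, y j ∈ Set.Icc (0:ℝ) 1 ∧ yh j ∈ Set.Icc (0:ℝ) 1)
    (hΔ'anti : ∀ t' ∈ Set.Icc (0:ℝ) T, AntitoneOn (fun z => Δ' z t') (Set.Icc 0 1))
    (hmonoΔ' : ∀ t' ∈ Set.Icc (0:ℝ) T, MonotoneOn (fun z => z + Δ' z t') (Set.Icc 0 1))
    (heps : ∀ z ∈ Set.Icc (0:ℝ) 1, ∀ t' ∈ Set.Icc (0:ℝ) T, 0 ≤ Δ' z t' - Δ z t') :
    (∀ j ≤ n, (∀ i < j, chg i = false) → yh j - y j = 0) ∧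
    (∀ j ≤ n, ∀ i < j, chg i = true → (∀ i', i < i' → i' < j → chg i' = false) →
      0 ≤ Δ' (y i) (t i) - Δ (y i) (t i) ∧
      Δ' (y i) (t i) - Δ (y i) (t i) ≤ yh j - y j ∧
      yh j - y j ≤ ∑ i' ∈ (Finset.range j).filter (fun i' => chg i' = true),
        (Δ' (y i') (t i') - Δ (y i') (t i'))) := by
  have hrec : ErrorRecursion n chg (fun j => yh j - y j)
      (fun j => Δ' (y j) (t j) - Δ (y j) (t j)) := by
    refine ⟨by simp [hy0, hyh0], fun j hj => heps _ (hrange j hj.le).1 _ (ht j),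
      fun j hj hc => ?_, fun j hj hc hd => ?_⟩
    · rw [(hystep j hj).2 hc, (hyhstep j hj).2 hc, sub_sub_sub_cancel_right]
    · obtain ⟨hy, hyh⟩ := hrange j hj.le
      rw [(hystep j hj).1 hc, (hyhstep j hj).1 hc]
      exact ⟨charge_step_error_ge (hmonoΔ' _ (ht j)) hy hyh (sub_nonneg.mp hd),
        charge_step_error_le (hΔ'anti _ (ht j)) hy hyh (sub_nonneg.mp hd)⟩
  refine ⟨fun j hj hno => ?_, fun j hj i hij hci hno =>
    ⟨hrec.local_nonneg i (hij.trans_le hj), hrec.le_of_last_charge hij hj hci hno,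
      hrec.le_sum j hj⟩⟩
  rw [hrec.eq_of_forall_Ico_discharge j.zero_le hj fun k _ hk => hno k hk]
  exact hrec.zero

/-- Symmetric overestimation bound: if ε(y,t) = Δζ̂(y,t) − Δζ(y,t) ≥ 0
everywhere, then along any vehicle course ε(C_j) = 0 before the first recharge event and
0 ≤ ε(y(s_i^s), t_i) ≤ ε(C_j) ≤ Σ_{i' : s_{i'}^e ⪯ C_j} ε(y(s_{i'}^s), t_{i'}) for all
later elements C_j, where i is the recharge event immediately preceding C_j's block. -/
theorem error_propagation_overestimate
    (n : ℕ) (chg : ℕ → Bool) (t e : ℕ → ℝ) (T : ℝ) (hT : 0 < T)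
    (Δ Δ' : ℝ → ℝ → ℝ)  -- exact and approximate charge increment functions Δζ, Δζ̂
    (he : ∀ j, 0 ≤ e j) (ht : ∀ j, t j ∈ Set.Icc 0 T)
    (y yh : ℕ → ℝ)       -- exact and approximate charge propagation along the course
    (hy0 : y 0 = 1) (hyh0 : yh 0 = 1)
    (hystep : ∀ j < n,
      (chg j = true → y (j + 1) = y j + Δ (y j) (t j)) ∧
      (chg j = false → y (j + 1) = y j - e j))
    (hyhstep : ∀ j < n,
      (chg j = true → yh (j + 1) = yh j + Δ' (yh j) (t j)) ∧
      (chg j = false → yh (j + 1) = yh j - e j))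
    (hrange : ∀ j ≤ n, y j ∈ Set.Icc (0:ℝ) 1 ∧ yh j ∈ Set.Icc (0:ℝ) 1)
    (hΔanti : ∀ t' ∈ Set.Icc (0:ℝ) T, AntitoneOn (fun z => Δ z t') (Set.Icc 0 1))
    (hΔ'anti : ∀ t' ∈ Set.Icc (0:ℝ) T, AntitoneOn (fun z => Δ' z t') (Set.Icc 0 1))
    (hmonoΔ : ∀ t' ∈ Set.Icc (0:ℝ) T, MonotoneOn (fun z => z + Δ z t') (Set.Icc 0 1))
    (hmonoΔ' : ∀ t' ∈ Set.Icc (0:ℝ) T, MonotoneOn (fun z => z + Δ' z t') (Set.Icc 0 1))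
    (heps : ∀ z ∈ Set.Icc (0:ℝ) 1, ∀ t' ∈ Set.Icc (0:ℝ) T, 0 ≤ Δ' z t' - Δ z t') :
    (∀ j ≤ n, (∀ i < j, chg i = false) → yh j - y j = 0) ∧
    (∀ j ≤ n, ∀ i < j, chg i = true → (∀ i', i < i' → i' < j → chg i' = false) →
      0 ≤ Δ' (y i) (t i) - Δ (y i) (t i) ∧
      Δ' (y i) (t i) - Δ (y i) (t i) ≤ yh j - y j ∧
      yh j - y j ≤ ∑ i' ∈ (Finset.range j).filter (fun i' => chg i' = true),
        (Δ' (y i') (t i') - Δ (y i') (t i'))) :=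
  error_propagation_overestimate_general n chg t e T Δ Δ' ht y yh hy0 hyh0 hystep hyhstep hrange
    hΔ'anti hmonoΔ' heps
end

section
/- Cumulative error bound for the charge increment domain linearization: suppose the approximation satisfies ‖Δζ̂ − Δζ‖_∞ ≤ B and Δζ̂ ≤ Δζ pointwise. Then along any vehicle course C, the cumulative charge state error satisfies |ŷ(C_j) − y(C_j)| ≤ σ(j)·B for every element C_j, where σ(j) is the number of recharge events preceding C_j. -/
/-!
Both propagations subtract the same consumption on driving blocks, so the error changes only at
recharge events. There, if `Δ(·, t)` is antitone and `z ↦ z + Δ(z, t)` is monotone, the exact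
update `z ↦ z + Δ(z, t)` is nonexpansive; hence applying `Δ̂` to `ŷ` instead of `Δ` to `y` adds
at most `‖Δ̂ − Δ‖_∞ ≤ B` to the error, and the errors add up to `σ(j) · B`.
-/

open Finset

theorem AntitoneOn.abs_add_self_sub_add_self_le {f : ℝ → ℝ} {s : Set ℝ} (hf : AntitoneOn f s)
    (hmono : MonotoneOn (fun z => z + f z) s) {a b : ℝ} (ha : a ∈ s) (hb : b ∈ s) :
    |(a + f a) - (b + f b)| ≤ |a - b| := by
  wlog hab : a ≤ b generalizing a b
  · rw [abs_sub_comm, abs_sub_comm a]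
    exact this hb ha (le_of_not_ge hab)
  have h₁ : a + f a ≤ b + f b := hmono ha hb hab
  have h₂ : f b ≤ f a := hf ha hb hab
  rw [abs_of_nonpos (by linarith), abs_of_nonpos (by linarith)]
  linarith

theorem AntitoneOn.abs_add_approx_sub_add_le {f g : ℝ → ℝ} {s : Set ℝ} {B : ℝ}
    (hf : AntitoneOn f s) (hmono : MonotoneOn (fun z => z + f z) s)
    (hB : ∀ z ∈ s, |g z - f z| ≤ B) {a b : ℝ} (ha : a ∈ s) (hb : b ∈ s) :
    |(a + g a) - (b + f b)| ≤ |a - b| + B :=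
  calc |(a + g a) - (b + f b)| = |((a + f a) - (b + f b)) + (g a - f a)| := by ring_nf
    _ ≤ |(a + f a) - (b + f b)| + |g a - f a| := abs_add_le _ _
    _ ≤ |a - b| + B := add_le_add (hf.abs_add_self_sub_add_self_le hmono ha hb) (hB a ha)

theorem le_sum_range_of_le_add {a b : ℕ → ℝ} {n : ℕ} (h₀ : a 0 ≤ 0)
    (hstep : ∀ j < n, a (j + 1) ≤ a j + b j) : ∀ j ≤ n, a j ≤ ∑ i ∈ range j, b i := by
  intro j hj
  induction j with
  | zero => simpa using h₀
  | succ j ih =>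
    rw [sum_range_succ]
    linarith [ih (by omega), hstep j hj]

theorem cumulative_error_bound_general
    (n : ℕ) (chg : ℕ → Bool) (t e : ℕ → ℝ) (T : ℝ)
    (Δ Δ' : ℝ → ℝ → ℝ)  -- exact and approximate charge increment functions Δζ, Δζ̂
    (ht : ∀ j, t j ∈ Set.Icc 0 T)
    (y yh : ℕ → ℝ)       -- exact and approximate charge propagation along the course
    (hy0 : y 0 = 1) (hyh0 : yh 0 = 1)
    (hystep : ∀ j < n,
      (chg j = true → y (j + 1) = y j + Δ (y j) (t j)) ∧
      (chg j = false → y (j + 1) = y j - e j))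
    (hyhstep : ∀ j < n,
      (chg j = true → yh (j + 1) = yh j + Δ' (yh j) (t j)) ∧
      (chg j = false → yh (j + 1) = yh j - e j))
    (hrange : ∀ j ≤ n, y j ∈ Set.Icc (0:ℝ) 1 ∧ yh j ∈ Set.Icc (0:ℝ) 1)
    (hΔanti : ∀ t' ∈ Set.Icc (0:ℝ) T, AntitoneOn (fun z => Δ z t') (Set.Icc 0 1))
    (hmonoΔ : ∀ t' ∈ Set.Icc (0:ℝ) T, MonotoneOn (fun z => z + Δ z t') (Set.Icc 0 1))
    (B : ℝ)
    (hB : ∀ z ∈ Set.Icc (0:ℝ) 1, ∀ t' ∈ Set.Icc (0:ℝ) T, |Δ' z t' - Δ z t'| ≤ B) :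
    ∀ j ≤ n, |yh j - y j| ≤
      ((Finset.range j).filter (fun i => chg i = true)).card * B := by
  have hstep : ∀ j < n,
      |yh (j + 1) - y (j + 1)| ≤ |yh j - y j| + if chg j = true then B else 0 := by
    intro j hj
    obtain ⟨hy, hyh⟩ := hrange j hj.le
    cases hc : chg j
    · simp [(hystep j hj).2 hc, (hyhstep j hj).2 hc]
    · rw [(hystep j hj).1 hc, (hyhstep j hj).1 hc, if_pos rfl]
      exact (hΔanti _ (ht j)).abs_add_approx_sub_add_le (hmonoΔ _ (ht j))
        (fun z hz => hB z hz _ (ht j)) hyh hy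
  intro j hj
  calc |yh j - y j| ≤ ∑ i ∈ range j, if chg i = true then B else 0 :=
        le_sum_range_of_le_add (a := fun j => |yh j - y j|) (by simp [hy0, hyh0]) hstep j hj
    _ = ((range j).filter (fun i => chg i = true)).card * B := by
        rw [← sum_filter, sum_const, nsmul_eq_mul]

/-- Cumulative error bound for the charge increment domain linearization:
if ‖Δζ̂ − Δζ‖ ≤ B and Δζ̂ ≤ Δζ pointwise, then along any vehicle course the cumulative
charge state error satisfies |ŷ(C_j) − y(C_j)| ≤ σ(j)·B, where σ(j) is the number of
recharge events preceding C_j. -/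
theorem cumulative_error_bound
    (n : ℕ) (chg : ℕ → Bool) (t e : ℕ → ℝ) (T : ℝ) (hT : 0 < T)
    (Δ Δ' : ℝ → ℝ → ℝ)  -- exact and approximate charge increment functions Δζ, Δζ̂
    (he : ∀ j, 0 ≤ e j) (ht : ∀ j, t j ∈ Set.Icc 0 T)
    (y yh : ℕ → ℝ)       -- exact and approximate charge propagation along the course
    (hy0 : y 0 = 1) (hyh0 : yh 0 = 1)
    (hystep : ∀ j < n,
      (chg j = true → y (j + 1) = y j + Δ (y j) (t j)) ∧
      (chg j = false → y (j + 1) = y j - e j))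
    (hyhstep : ∀ j < n,
      (chg j = true → yh (j + 1) = yh j + Δ' (yh j) (t j)) ∧
      (chg j = false → yh (j + 1) = yh j - e j))
    (hrange : ∀ j ≤ n, y j ∈ Set.Icc (0:ℝ) 1 ∧ yh j ∈ Set.Icc (0:ℝ) 1)
    (hΔanti : ∀ t' ∈ Set.Icc (0:ℝ) T, AntitoneOn (fun z => Δ z t') (Set.Icc 0 1))
    (hΔ'anti : ∀ t' ∈ Set.Icc (0:ℝ) T, AntitoneOn (fun z => Δ' z t') (Set.Icc 0 1))
    (hmonoΔ : ∀ t' ∈ Set.Icc (0:ℝ) T, MonotoneOn (fun z => z + Δ z t') (Set.Icc 0 1))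
    (hmonoΔ' : ∀ t' ∈ Set.Icc (0:ℝ) T, MonotoneOn (fun z => z + Δ' z t') (Set.Icc 0 1))
    (heps : ∀ z ∈ Set.Icc (0:ℝ) 1, ∀ t' ∈ Set.Icc (0:ℝ) T, Δ' z t' ≤ Δ z t')
    (B : ℝ)
    (hB : ∀ z ∈ Set.Icc (0:ℝ) 1, ∀ t' ∈ Set.Icc (0:ℝ) T, |Δ' z t' - Δ z t'| ≤ B) :
    ∀ j ≤ n, |yh j - y j| ≤
      ((Finset.range j).filter (fun i => chg i = true)).card * B :=
  cumulative_error_bound_general n chg t e T Δ Δ' ht y yh hy0 hyh0 hystep hyhstep hrange hΔanti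
    hmonoΔ B hB
end
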